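/- arXiv:2002.08994 — 8 statements merged into one kernel-verified Lean document; each statement's English description precedes it below -/
import Mathlib

section
/- For all real u in [0, 1/2], M_0(u) ≥ √(1 − 2u), where M_0(u) = e^u − √(πu)·erfi(√u) and erfi(x) = (2/√π)∫₀ˣ e^{z²} dz. -/
open Real

noncomputable def erfi (x : ℝ) : ℝ := (2 / Real.sqrt π) * ∫ z in (0:ℝ)..x, Real.exp (z ^ 2)

noncomputable def M0 (u : ℝ) : ℝ := Real.exp u - Real.sqrt (π * u) * erfi (Real.sqrt u)

lemma exp_le_one_add_mul_exp (t : ℝ) : Real.exp t ≤ 1 + t * Real.exp t := by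
  have h1 := Real.add_one_le_exp (-t)
  rw [Real.exp_neg] at h1
  have h2 : (1 - t) * Real.exp t ≤ (Real.exp t)⁻¹ * Real.exp t :=
    mul_le_mul_of_nonneg_right (by linarith) (Real.exp_pos t).le
  rw [inv_mul_cancel₀ (Real.exp_pos t).ne'] at h2
  nlinarith

theorem M0_ge_sqrt (u : ℝ) (hu : u ∈ Set.Icc (0:ℝ) (1/2)) :
    M0 u ≥ Real.sqrt (1 - 2 * u) := by
  obtain ⟨hu0, hu1⟩ := hu
  set s := Real.sqrt u with hs
  have hs0 : 0 ≤ s := Real.sqrt_nonneg u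
  have hsq : s ^ 2 = u := Real.sq_sqrt hu0
  have hπ : (0:ℝ) < Real.sqrt π := Real.sqrt_pos.2 Real.pi_pos
  -- Rewrite M0 as exp u - 2 s ∫
  have hM : M0 u = Real.exp u - 2 * s * ∫ z in (0:ℝ)..s, Real.exp (z ^ 2) := by
    unfold M0 erfi
    rw [Real.sqrt_mul Real.pi_pos.le, ← hs]
    field_simp
  -- Pointwise bound on the integrand
  have hpt : ∀ z ∈ Set.Icc (0:ℝ) s, Real.exp (z ^ 2) ≤ 1 + Real.exp u * z ^ 2 := by
    intro z hz
    have hz0 : 0 ≤ z := hz.1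
    have hz2 : z ^ 2 ≤ u := by
      have : z ^ 2 ≤ s ^ 2 := by nlinarith [hz.2]
      linarith [hsq ▸ this]
    have h1 : Real.exp (z ^ 2) ≤ 1 + z ^ 2 * Real.exp (z ^ 2) :=
      exp_le_one_add_mul_exp (z ^ 2)
    have h2 : Real.exp (z ^ 2) ≤ Real.exp u := Real.exp_le_exp.2 hz2
    nlinarith [sq_nonneg z]
  -- Integral bound
  have hIb : (∫ z in (0:ℝ)..s, Real.exp (z ^ 2)) ≤ s + Real.exp u * s ^ 3 / 3 := by
    have hint : ∫ z in (0:ℝ)..s, (1 + Real.exp u * z ^ 2) = s + Real.exp u * s ^ 3 / 3 := by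
      rw [intervalIntegral.integral_add intervalIntegrable_const
        ((intervalIntegral.intervalIntegrable_pow 2).const_mul _),
        intervalIntegral.integral_const_mul, integral_pow, intervalIntegral.integral_const,
        smul_eq_mul]
      ring
    rw [← hint]
    apply intervalIntegral.integral_mono_on hs0
    · exact (Continuous.intervalIntegrable (by continuity) 0 s)
    · exact (Continuous.intervalIntegrable (by continuity) 0 s)
    · exact hpt
  -- Lower Taylor bound for exp
  have hE : 1 + u + u ^ 2 / 4 ≤ Real.exp u := by
    have h1 : (1 : ℝ) + u / 2 ≤ Real.exp (u / 2) := by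
      have := Real.add_one_le_exp (u / 2); linarith
    have h2 : Real.exp u = Real.exp (u / 2) * Real.exp (u / 2) := by
      rw [← Real.exp_add]; ring_nf
    nlinarith [Real.exp_pos (u / 2)]
  -- Polynomial lower bound A
  set A : ℝ := 1 - u - 5 * u ^ 2 / 12 - 2 * u ^ 3 / 3 - u ^ 4 / 6 with hA
  have hA0 : 0 ≤ A := by
    rw [hA]; nlinarith [sq_nonneg u, pow_nonneg hu0 3, pow_nonneg hu0 4]
  have hAsq : 1 - 2 * u ≤ A ^ 2 := by
    rw [hA]
    nlinarith [sq_nonneg (u - 1/4), sq_nonneg u, mul_nonneg (sq_nonneg u) (sq_nonneg (u - 1/4)),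
      sq_nonneg (5*u^2/12 + 2*u^3/3 + u^4/6), pow_nonneg hu0 3, pow_nonneg hu0 2,
      mul_nonneg (pow_nonneg hu0 3) (pow_nonneg hu0 2)]
  have hsqrtA : Real.sqrt (1 - 2 * u) ≤ A := by
    calc Real.sqrt (1 - 2 * u) ≤ Real.sqrt (A ^ 2) := Real.sqrt_le_sqrt hAsq
      _ = A := by rw [Real.sqrt_sq hA0]
  -- Combine
  have hs4 : s ^ 4 = u ^ 2 := by rw [show s ^ 4 = (s ^ 2) ^ 2 by ring, hsq]
  have hfinal : A ≤ Real.exp u - 2 * s * (s + Real.exp u * s ^ 3 / 3) := by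
    have hcoef : 2 * s * (s + Real.exp u * s ^ 3 / 3)
        = 2 * u + 2 / 3 * Real.exp u * u ^ 2 := by
      have : 2 * s * (s + Real.exp u * s ^ 3 / 3)
          = 2 * s ^ 2 + 2 / 3 * Real.exp u * s ^ 4 := by ring
      rw [this, hsq, hs4]
    rw [hcoef, hA]
    have key : 0 ≤ (Real.exp u - (1 + u + u ^ 2 / 4)) * (1 - 2 * u ^ 2 / 3) :=
      mul_nonneg (by linarith) (by nlinarith)
    linarith [key]
  have hmono : Real.exp u - 2 * s * (s + Real.exp u * s ^ 3 / 3)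
      ≤ Real.exp u - 2 * s * ∫ z in (0:ℝ)..s, Real.exp (z ^ 2) := by
    have := mul_le_mul_of_nonneg_left hIb (by linarith : (0:ℝ) ≤ 2 * s)
    linarith
  rw [ge_iff_le, hM]
  exact le_trans hsqrtA (le_trans hfinal hmono)
end

section
/- The function M_0(x) = e^x − √(πx)·erfi(√x) is decreasing and concave on [0, ∞). -/
open Real

/-!
With `F s = ∫₀ˢ exp (z²) dz` we have `M0 u = exp u - 2 √u F(√u)`, so `M0' u = -F(√u) / √u` for
`u > 0`. The substitution `z = √u t` turns `F(√u) / √u` into `∫₀¹ exp (u t²) dt`, which is positive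
and increasing in `u`: hence `M0'` is negative and decreasing.
-/

noncomputable def expSqMean (u : ℝ) : ℝ := ∫ t in (0:ℝ)..1, exp (u * t ^ 2)

lemma continuous_exp_mul_sq (u : ℝ) : Continuous fun t : ℝ => exp (u * t ^ 2) := by fun_prop

lemma expSqMean_pos (u : ℝ) : 0 < expSqMean u :=
  intervalIntegral.intervalIntegral_pos_of_pos_on ((continuous_exp_mul_sq u).intervalIntegrable 0 1)
    (fun _ _ => exp_pos _) zero_lt_one

lemma monotone_expSqMean : Monotone expSqMean := fun u v huv =>
  intervalIntegral.integral_mono_on zero_le_one ((continuous_exp_mul_sq u).intervalIntegrable 0 1)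
    ((continuous_exp_mul_sq v).intervalIntegrable 0 1)
    fun t _ => exp_le_exp.2 (mul_le_mul_of_nonneg_right huv (sq_nonneg t))

lemma integral_exp_sq_eq_mul_expSqMean (s : ℝ) :
    ∫ z in (0:ℝ)..s, exp (z ^ 2) = s * expSqMean (s ^ 2) := by
  have h := intervalIntegral.mul_integral_comp_mul_left (a := 0) (b := 1)
    (f := fun z => exp (z ^ 2)) s
  simp only [mul_zero, mul_one, mul_pow] at h
  exact h.symm

lemma erfi_eq_mul_expSqMean (x : ℝ) : erfi x = 2 / √π * (x * expSqMean (x ^ 2)) := by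
  rw [erfi, integral_exp_sq_eq_mul_expSqMean]

lemma hasDerivAt_erfi (x : ℝ) : HasDerivAt erfi (2 / √π * exp (x ^ 2)) x :=
  ((by fun_prop : Continuous fun z : ℝ => exp (z ^ 2)).integral_hasStrictDerivAt 0 x
    |>.hasDerivAt.const_mul _)

lemma M0_eq : M0 = fun u => exp u - √π * (√u * erfi √u) := by
  ext u
  rw [M0, sqrt_mul pi_pos.le, mul_assoc]

lemma hasDerivAt_M0 {u : ℝ} (hu : 0 < u) : HasDerivAt M0 (-expSqMean u) u := by
  have hsqrt := hasDerivAt_sqrt hu.ne'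
  have h := (hasDerivAt_exp u).sub
    (((hsqrt.mul ((hasDerivAt_erfi √u).comp u hsqrt))).const_mul √π)
  rw [M0_eq]
  refine h.congr_deriv ?_
  rw [Function.comp_apply, erfi_eq_mul_expSqMean, sq_sqrt hu.le]
  field_simp
  ring

lemma continuous_M0 : Continuous M0 := by
  have : Continuous erfi := continuous_iff_continuousAt.2 fun x => (hasDerivAt_erfi x).continuousAt
  rw [M0_eq]
  fun_prop

theorem M0_strictAntiOn_concaveOn :
    StrictAntiOn M0 (Set.Ici 0) ∧ ConcaveOn ℝ (Set.Ici 0) M0 := by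
  have hderiv : ∀ u ∈ interior (Set.Ici (0:ℝ)), HasDerivAt M0 (-expSqMean u) u := fun u hu =>
    hasDerivAt_M0 (by simpa using hu)
  refine ⟨strictAntiOn_of_hasDerivWithinAt_neg (convex_Ici 0) continuous_M0.continuousOn
    (fun u hu => (hderiv u hu).hasDerivWithinAt) fun u _ => neg_neg_of_pos (expSqMean_pos u), ?_⟩
  refine AntitoneOn.concaveOn_of_deriv (convex_Ici 0) continuous_M0.continuousOn
    (fun u hu => (hderiv u hu).differentiableAt.differentiableWithinAt) ?_
  intro u hu v hv huv
  rw [(hderiv u hu).deriv, (hderiv v hv).deriv]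
  exact neg_le_neg (monotone_expSqMean huv)
end

section
/- The function x ↦ M_0(x²/2) has a unique positive root γ; moreover M_0(x²/2) > 0 for x ∈ (0, γ) and M_0(x²/2) < 0 for x > γ. -/
/-! Substituting `x = √2 t` turns `M0 (x ^ 2 / 2)` into `exp (t ^ 2) - 2 t ∫₀ᵗ exp (z ^ 2) dz`,
whose derivative `-2 ∫₀ᵗ exp (z ^ 2) dz` is negative for `t > 0`. This function starts at `1` and
is at most `1 - t ^ 2`, so it is strictly decreasing on `[0, ∞)` and crosses zero exactly once. -/

open Real

open Set

theorem exists_unique_zero_of_strictAntiOn_Ici {f : ℝ → ℝ} {a b : ℝ}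
    (hcont : ContinuousOn f (Ici a)) (hanti : StrictAntiOn f (Ici a))
    (ha : 0 < f a) (hab : a ≤ b) (hb : f b < 0) :
    ∃ γ, a < γ ∧ f γ = 0 ∧ (∀ x, a ≤ x → f x = 0 → x = γ) ∧
      (∀ x, a ≤ x → x < γ → 0 < f x) ∧ (∀ x, γ < x → f x < 0) := by
  obtain ⟨γ, ⟨haγ, -⟩, hfγ⟩ :=
    intermediate_value_Icc' hab (hcont.mono Icc_subset_Ici_self) ⟨hb.le, ha.le⟩
  have hγ : γ ∈ Ici a := haγ
  refine ⟨γ, lt_of_le_of_ne haγ ?_, hfγ, ?_, ?_, ?_⟩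
  · rintro rfl
    exact ha.ne' hfγ
  · exact fun x hx hfx => hanti.injOn hx hγ (hfx.trans hfγ.symm)
  · exact fun x hx hxγ => hfγ ▸ hanti hx hγ hxγ
  · exact fun x hγx => hfγ ▸ hanti hγ (haγ.trans hγx.le : a ≤ x) hγx

noncomputable def expSqIntegral (t : ℝ) : ℝ := ∫ z in (0 : ℝ)..t, exp (z ^ 2)

noncomputable def M0Sq (t : ℝ) : ℝ := exp (t ^ 2) - 2 * t * expSqIntegral t

theorem continuous_exp_sq : Continuous fun z : ℝ => exp (z ^ 2) := by fun_prop

theorem hasDerivAt_expSqIntegral (t : ℝ) : HasDerivAt expSqIntegral (exp (t ^ 2)) t :=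
  intervalIntegral.integral_hasDerivAt_right (continuous_exp_sq.intervalIntegrable _ _)
    (continuous_exp_sq.stronglyMeasurableAtFilter _ _) continuous_exp_sq.continuousAt

theorem expSqIntegral_pos {t : ℝ} (ht : 0 < t) : 0 < expSqIntegral t :=
  intervalIntegral.intervalIntegral_pos_of_pos_on (continuous_exp_sq.intervalIntegrable _ _)
    (fun _ _ => exp_pos _) ht

theorem le_expSqIntegral {t : ℝ} (ht : 0 ≤ t) : t ≤ expSqIntegral t := by
  calc t = ∫ _ in (0 : ℝ)..t, (1 : ℝ) := by simp
    _ ≤ expSqIntegral t :=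
      intervalIntegral.integral_mono_on ht intervalIntegrable_const
        (continuous_exp_sq.intervalIntegrable _ _) fun z _ => one_le_exp (sq_nonneg z)

theorem hasDerivAt_M0Sq (t : ℝ) : HasDerivAt M0Sq (-(2 * expSqIntegral t)) t := by
  have hexp : HasDerivAt (fun t : ℝ => exp (t ^ 2)) (exp (t ^ 2) * (2 * t)) t := by
    simpa using (hasDerivAt_pow 2 t).exp
  have hprod : HasDerivAt (fun t => 2 * t * expSqIntegral t)
      (2 * expSqIntegral t + 2 * t * exp (t ^ 2)) t :=
    (((hasDerivAt_id' t).const_mul 2).mul (hasDerivAt_expSqIntegral t)).congr_deriv (by ring)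
  exact (hexp.sub hprod).congr_deriv (by ring)

theorem continuous_M0Sq : Continuous M0Sq :=
  continuous_iff_continuousAt.2 fun t => (hasDerivAt_M0Sq t).continuousAt

theorem strictAntiOn_M0Sq : StrictAntiOn M0Sq (Ici 0) := by
  refine strictAntiOn_of_deriv_neg (convex_Ici 0) continuous_M0Sq.continuousOn fun t ht => ?_
  rw [interior_Ici] at ht
  rw [(hasDerivAt_M0Sq t).deriv, neg_lt_zero]
  exact mul_pos two_pos (expSqIntegral_pos ht)

theorem M0Sq_zero : M0Sq 0 = 1 := by simp [M0Sq]

theorem M0Sq_le {t : ℝ} (ht : 0 ≤ t) : M0Sq t ≤ 1 - t ^ 2 := by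
  have hderiv (s : ℝ) : HasDerivAt (fun s => M0Sq s + s ^ 2) (-(2 * expSqIntegral s) + 2 * s) s :=
    ((hasDerivAt_M0Sq s).add (hasDerivAt_pow 2 s)).congr_deriv (by norm_num)
  have hanti : AntitoneOn (fun s => M0Sq s + s ^ 2) (Ici 0) := by
    refine antitoneOn_of_deriv_nonpos (convex_Ici 0)
      (continuous_M0Sq.add (continuous_pow 2)).continuousOn
      (fun s _ => (hderiv s).differentiableAt.differentiableWithinAt) fun s hs => ?_
    rw [interior_Ici] at hs
    rw [(hderiv s).deriv]
    linarith [le_expSqIntegral (le_of_lt hs)]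
  have hbound : M0Sq t + t ^ 2 ≤ 1 := by
    simpa [M0Sq_zero] using hanti self_mem_Ici (mem_Ici.2 ht) ht
  linarith

theorem M0_sq {t : ℝ} (ht : 0 ≤ t) : M0 (t ^ 2) = M0Sq t := by
  have hsqrt : sqrt (π * t ^ 2) = sqrt π * t := by
    rw [sqrt_mul pi_pos.le, sqrt_sq ht]
  have hπ : sqrt π ≠ 0 := (sqrt_pos.2 pi_pos).ne'
  rw [M0, M0Sq, sqrt_sq ht, hsqrt, erfi, expSqIntegral]
  field_simp

theorem M0_sq_div_two {x : ℝ} (hx : 0 ≤ x) : M0 (x ^ 2 / 2) = M0Sq (x / sqrt 2) := by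
  rw [← M0_sq (div_nonneg hx (sqrt_nonneg 2)), div_pow, sq_sqrt zero_le_two]

theorem M0_unique_positive_root :
    ∃ γ : ℝ, 0 < γ ∧ M0 (γ ^ 2 / 2) = 0 ∧
      (∀ x : ℝ, 0 < x → M0 (x ^ 2 / 2) = 0 → x = γ) ∧
      (∀ x : ℝ, 0 < x → x < γ → 0 < M0 (x ^ 2 / 2)) ∧
      (∀ x : ℝ, γ < x → M0 (x ^ 2 / 2) < 0) := by
  have hsqrt2 : 0 < sqrt 2 := sqrt_pos.2 two_pos
  have hcont : ContinuousOn (fun x => M0 (x ^ 2 / 2)) (Ici 0) :=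
    (continuous_M0Sq.comp (continuous_id.div_const _)).continuousOn.congr
      fun x hx => M0_sq_div_two hx
  have hanti : StrictAntiOn (fun x => M0 (x ^ 2 / 2)) (Ici 0) := fun x hx y hy hxy => by
    simp only [M0_sq_div_two (mem_Ici.1 hx), M0_sq_div_two (mem_Ici.1 hy)]
    exact strictAntiOn_M0Sq (div_nonneg hx hsqrt2.le) (div_nonneg hy hsqrt2.le)
      (div_lt_div_of_pos_right hxy hsqrt2)
  have hzero : 0 < M0 ((0 : ℝ) ^ 2 / 2) := by simp [M0]
  have hfar : M0 ((2 * sqrt 2) ^ 2 / 2) < 0 := by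
    rw [M0_sq_div_two (by positivity), mul_div_cancel_right₀ _ hsqrt2.ne']
    linarith [M0Sq_le zero_le_two]
  obtain ⟨γ, hγ, hroot, huniq, hpos, hneg⟩ :=
    exists_unique_zero_of_strictAntiOn_Ici hcont hanti hzero (by positivity) hfar
  exact ⟨γ, hγ, hroot, fun x hx => huniq x hx.le, fun x hx => hpos x hx.le, hneg⟩
end

section
/- For all real x and all z ∈ [0,1), the inequality ((e^{(x+z)²/2} + e^{(x−z)²/2})/2)·√(1−z²) ≤ e^{x²/(2(1−z²))} holds. -/
open Real

theorem exp_avg_ineq (x z : ℝ) (hz0 : 0 ≤ z) (hz1 : z < 1) :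
    ((Real.exp ((x + z) ^ 2 / 2) + Real.exp ((x - z) ^ 2 / 2)) / 2) *
      Real.sqrt (1 - z ^ 2) ≤ Real.exp (x ^ 2 / (2 * (1 - z ^ 2))) := by
  have hz2 : 0 < 1 - z ^ 2 := by nlinarith
  have h1 : ((Real.exp ((x + z) ^ 2 / 2) + Real.exp ((x - z) ^ 2 / 2)) / 2)
      = Real.exp ((x ^ 2 + z ^ 2) / 2) * Real.cosh (x * z) := by
    rw [Real.cosh_eq]
    rw [show (x + z) ^ 2 / 2 = (x ^ 2 + z ^ 2) / 2 + x * z by ring,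
        show (x - z) ^ 2 / 2 = (x ^ 2 + z ^ 2) / 2 + -(x * z) by ring,
        Real.exp_add, Real.exp_add]
    ring
  rw [h1]
  have h2 : Real.cosh (x * z) ≤ Real.exp ((x * z) ^ 2 / 2) :=
    Real.cosh_le_exp_half_sq (x * z)
  have h3 : Real.sqrt (1 - z ^ 2) ≤ Real.exp (-(z ^ 2) / 2) := by
    rw [Real.exp_half]
    exact Real.sqrt_le_sqrt (by nlinarith [Real.add_one_le_exp (-(z^2))])
  calc Real.exp ((x ^ 2 + z ^ 2) / 2) * Real.cosh (x * z) * Real.sqrt (1 - z ^ 2)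
      ≤ Real.exp ((x ^ 2 + z ^ 2) / 2) * Real.exp ((x * z) ^ 2 / 2) *
        Real.exp (-(z ^ 2) / 2) := by
        apply mul_le_mul
        · exact mul_le_mul_of_nonneg_left h2 (Real.exp_pos _).le
        · exact h3
        · exact Real.sqrt_nonneg _
        · positivity
    _ = Real.exp (x ^ 2 * (1 + z ^ 2) / 2) := by
        rw [← Real.exp_add, ← Real.exp_add]; ring_nf
    _ ≤ Real.exp (x ^ 2 / (2 * (1 - z ^ 2))) := by
        apply Real.exp_le_exp.2
        rw [div_le_div_iff₀ (by norm_num) (by positivity)]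
        nlinarith [sq_nonneg (x * z ^ 2), sq_nonneg x]
end

section
/- For all z ∈ [0,1) and all real x: M_0((x+z)²/2) + M_0((x−z)²/2) ≥ 2√(1−z²)·M_0(x²/(2(1−z²))). -/
open Real

/-!
Write `I v = ∫₀ᵛ exp (s²/2) ds` and `F v = exp (v²/2) - v I v`, so that `M₀ (v²/2) = F v`,
`F' = -I`, and `s ↦ s F (x/s)` has derivative `exp ((x/s)²/2)`. Hence the gap
`G t = F (x+t) + F (x-t) - 2√(1-t²) F (x/√(1-t²))` vanishes at `t = 0` and has derivative
`2t/√(1-t²) · exp (x²/(2(1-t²))) - (I (x+t) - I (x-t))`. As a function of `t`, `I (x+t) - I (x-t)`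
has derivative `exp ((x+t)²/2) + exp ((x-t)²/2) = 2 exp ((x²+t²)/2) cosh (xt)`, which is at most
`2 exp ((x²+t²+x²t²)/2)`; with `exp (t²/2) ≤ 1/√(1-t²)` and `(1+t²)(1-t²) ≤ 1` the mean value
theorem then gives `G' ≥ 0` on `[0, 1)`.
-/

noncomputable def integralExpHalfSq (v : ℝ) : ℝ := ∫ s in (0 : ℝ)..v, exp (s ^ 2 / 2)

noncomputable def M0HalfSq (v : ℝ) : ℝ := exp (v ^ 2 / 2) - v * integralExpHalfSq v

lemma hasDerivAt_exp_sq_div_two (v : ℝ) :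
    HasDerivAt (fun s : ℝ => exp (s ^ 2 / 2)) (v * exp (v ^ 2 / 2)) v := by
  have := ((hasDerivAt_pow 2 v).div_const 2).exp
  convert this using 1
  push_cast
  ring

lemma hasDerivAt_integralExpHalfSq (v : ℝ) :
    HasDerivAt integralExpHalfSq (exp (v ^ 2 / 2)) v := by
  have hcont : Continuous fun s : ℝ => exp (s ^ 2 / 2) := by fun_prop
  exact intervalIntegral.integral_hasDerivAt_right (hcont.intervalIntegrable _ _)
    (hcont.stronglyMeasurableAtFilter _ _) hcont.continuousAt

lemma integralExpHalfSq_neg (v : ℝ) : integralExpHalfSq (-v) = -integralExpHalfSq v := by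
  have := intervalIntegral.integral_comp_neg (a := 0) (b := v) fun s : ℝ => exp (s ^ 2 / 2)
  simp only [neg_sq, neg_zero] at this
  rw [integralExpHalfSq, integralExpHalfSq, this, intervalIntegral.integral_symm]

lemma integralExpHalfSq_eq_erfi (v : ℝ) :
    integralExpHalfSq v = √(π / 2) * erfi (v / √2) := by
  have h2 : √2 ≠ 0 := by positivity
  have hsub := intervalIntegral.integral_comp_div (a := 0) (b := v)
    (fun z : ℝ => exp (z ^ 2)) h2
  simp only [div_pow, sq_sqrt zero_le_two, zero_div, smul_eq_mul] at hsub
  rw [integralExpHalfSq, hsub, erfi, sqrt_div pi_pos.le]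
  field_simp
  rw [sq_sqrt zero_le_two]
  ring

lemma hasDerivAt_M0HalfSq (v : ℝ) : HasDerivAt M0HalfSq (-integralExpHalfSq v) v := by
  refine ((hasDerivAt_exp_sq_div_two v).sub
    ((hasDerivAt_id' v).mul (hasDerivAt_integralExpHalfSq v))).congr_deriv ?_
  ring

lemma M0HalfSq_neg (v : ℝ) : M0HalfSq (-v) = M0HalfSq v := by
  simp only [M0HalfSq, integralExpHalfSq_neg, neg_sq, neg_mul_neg]

lemma M0_sq_div_two_of_nonneg {v : ℝ} (hv : 0 ≤ v) : M0 (v ^ 2 / 2) = M0HalfSq v := by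
  have hroot : √(v ^ 2 / 2) = v / √2 := by
    rw [sqrt_div' _ zero_le_two, sqrt_sq hv]
  have hroot' : √(π * (v ^ 2 / 2)) = v * √(π / 2) := by
    rw [show π * (v ^ 2 / 2) = v ^ 2 * (π / 2) by ring, sqrt_mul (sq_nonneg v), sqrt_sq hv]
  rw [M0, M0HalfSq, hroot, hroot', integralExpHalfSq_eq_erfi]
  ring

lemma M0_sq_div_two_s6 (v : ℝ) : M0 (v ^ 2 / 2) = M0HalfSq v := by
  rcases le_total 0 v with hv | hv
  · exact M0_sq_div_two_of_nonneg hv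
  · rw [← neg_sq, M0_sq_div_two_of_nonneg (neg_nonneg.2 hv), M0HalfSq_neg]

lemma exp_sq_div_two_le_inv_sqrt_one_sub_sq {t : ℝ} (ht : t ^ 2 < 1) :
    exp (t ^ 2 / 2) ≤ (√(1 - t ^ 2))⁻¹ := by
  rw [le_inv_comm₀ (exp_pos _) (sqrt_pos.2 (by linarith)), ← exp_neg, sqrt_le_left (exp_pos _).le,
    ← exp_nat_mul, show ((2 : ℕ) : ℝ) * -(t ^ 2 / 2) = -t ^ 2 by push_cast; ring]
  linarith [add_one_le_exp (-t ^ 2)]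

lemma exp_add_sq_div_two_add_exp_sub_sq_div_two_le (x : ℝ) {u t : ℝ} (hu : u ^ 2 ≤ t ^ 2)
    (ht : t ^ 2 < 1) :
    exp ((x + u) ^ 2 / 2) + exp ((x - u) ^ 2 / 2) ≤
      2 / √(1 - t ^ 2) * exp (x ^ 2 / (2 * (1 - t ^ 2))) := by
  have hsum : exp ((x + u) ^ 2 / 2) + exp ((x - u) ^ 2 / 2) =
      2 * exp ((x ^ 2 + u ^ 2) / 2) * cosh (x * u) := by
    rw [cosh_eq, show (x + u) ^ 2 / 2 = (x ^ 2 + u ^ 2) / 2 + x * u by ring,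
      show (x - u) ^ 2 / 2 = (x ^ 2 + u ^ 2) / 2 + -(x * u) by ring, exp_add, exp_add]
    ring
  have hexponent :
      (x ^ 2 + u ^ 2) / 2 + (x * u) ^ 2 / 2 ≤ t ^ 2 / 2 + x ^ 2 / (2 * (1 - t ^ 2)) := by
    have : x ^ 2 * (1 + t ^ 2) / 2 ≤ x ^ 2 / (2 * (1 - t ^ 2)) := by
      rw [le_div_iff₀ (by linarith)]
      nlinarith [sq_nonneg x, sq_nonneg (x * t ^ 2)]
    nlinarith [sq_nonneg x]
  calc exp ((x + u) ^ 2 / 2) + exp ((x - u) ^ 2 / 2)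
      ≤ 2 * exp ((x ^ 2 + u ^ 2) / 2) * exp ((x * u) ^ 2 / 2) := by
        rw [hsum]; gcongr; exact cosh_le_exp_half_sq _
    _ ≤ 2 * exp (t ^ 2 / 2) * exp (x ^ 2 / (2 * (1 - t ^ 2))) := by
        rw [mul_assoc, mul_assoc, ← exp_add, ← exp_add]; gcongr
    _ ≤ 2 / √(1 - t ^ 2) * exp (x ^ 2 / (2 * (1 - t ^ 2))) := by
        rw [div_eq_mul_inv (2 : ℝ)]; gcongr; exact exp_sq_div_two_le_inv_sqrt_one_sub_sq ht

lemma integralExpHalfSq_add_sub_integralExpHalfSq_sub_le (x : ℝ) {t : ℝ} (ht0 : 0 ≤ t)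
    (ht1 : t < 1) :
    integralExpHalfSq (x + t) - integralExpHalfSq (x - t) ≤
      2 * t / √(1 - t ^ 2) * exp (x ^ 2 / (2 * (1 - t ^ 2))) := by
  set f : ℝ → ℝ := fun u => integralExpHalfSq (x + u) - integralExpHalfSq (x - u)
  have hf : ∀ u, HasDerivAt f (exp ((x + u) ^ 2 / 2) + exp ((x - u) ^ 2 / 2)) u := fun u =>
    (((hasDerivAt_integralExpHalfSq _).comp u ((hasDerivAt_id' u).const_add x)).sub
      ((hasDerivAt_integralExpHalfSq _).comp u ((hasDerivAt_id' u).const_sub x))).congr_deriv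
      (by ring)
  have hdiff : Differentiable ℝ f := fun u => (hf u).differentiableAt
  have hmvt := (convex_Icc 0 t).image_sub_le_mul_sub_of_deriv_le hdiff.continuous.continuousOn
    hdiff.differentiableOn (C := 2 / √(1 - t ^ 2) * exp (x ^ 2 / (2 * (1 - t ^ 2))))
    (fun u hu => ?_) 0 ⟨le_rfl, ht0⟩ t ⟨ht0, le_rfl⟩ ht0
  · simp only [f, add_zero, sub_zero, sub_self] at hmvt
    exact hmvt.trans_eq (by ring)
  · rw [interior_Icc] at hu
    rw [(hf u).deriv]
    exact exp_add_sq_div_two_add_exp_sub_sq_div_two_le x (by nlinarith [hu.1, hu.2])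
      (by nlinarith)

lemma hasDerivAt_mul_M0HalfSq_div (x : ℝ) {s : ℝ} (hs : s ≠ 0) :
    HasDerivAt (fun s => s * M0HalfSq (x / s)) (exp ((x / s) ^ 2 / 2)) s := by
  refine ((hasDerivAt_id' s).mul ((hasDerivAt_M0HalfSq (x / s)).comp s
    ((hasDerivAt_const s x).div (hasDerivAt_id' s) hs))).congr_deriv ?_
  simp only [Function.comp_apply, M0HalfSq]
  field_simp
  ring

lemma hasDerivAt_sqrt_one_sub_sq {t : ℝ} (ht : t ^ 2 < 1) :
    HasDerivAt (fun t => √(1 - t ^ 2)) (-t / √(1 - t ^ 2)) t := by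
  refine (((hasDerivAt_pow 2 t).const_sub 1).sqrt (by linarith)).congr_deriv ?_
  have : √(1 - t ^ 2) ≠ 0 := (sqrt_pos.2 (by linarith)).ne'
  field_simp
  push_cast
  ring

noncomputable def threePointGap (x t : ℝ) : ℝ :=
  M0HalfSq (x + t) + M0HalfSq (x - t) - 2 * (√(1 - t ^ 2) * M0HalfSq (x / √(1 - t ^ 2)))

lemma hasDerivAt_threePointGap (x : ℝ) {t : ℝ} (ht : t ^ 2 < 1) :
    HasDerivAt (threePointGap x)
      (integralExpHalfSq (x - t) - integralExpHalfSq (x + t) +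
        2 * t / √(1 - t ^ 2) * exp (x ^ 2 / (2 * (1 - t ^ 2)))) t := by
  have hroot : √(1 - t ^ 2) ≠ 0 := (sqrt_pos.2 (by linarith)).ne'
  have hplus := (hasDerivAt_M0HalfSq _).comp t ((hasDerivAt_id' t).const_add x)
  have hminus := (hasDerivAt_M0HalfSq _).comp t ((hasDerivAt_id' t).const_sub x)
  have hscaled := (hasDerivAt_mul_M0HalfSq_div x hroot).comp t (hasDerivAt_sqrt_one_sub_sq ht)
  refine ((hplus.add hminus).sub (hscaled.const_mul 2)).congr_deriv ?_
  rw [div_pow, sq_sqrt (by linarith), div_div, mul_comm (1 - t ^ 2)]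
  ring

lemma threePointGap_zero (x : ℝ) : threePointGap x 0 = 0 := by
  simp only [threePointGap, add_zero, sub_zero, zero_pow two_ne_zero, sqrt_one, div_one, one_mul]
  ring

lemma monotoneOn_threePointGap (x : ℝ) : MonotoneOn (threePointGap x) (Set.Ico 0 1) := by
  have hderiv : ∀ t ∈ Set.Ico (0 : ℝ) 1, HasDerivAt (threePointGap x) _ t := fun t ht =>
    hasDerivAt_threePointGap x (t := t) (by nlinarith [ht.1, ht.2])
  refine monotoneOn_of_hasDerivWithinAt_nonneg (convex_Ico 0 1)
    (fun t ht => (hderiv t ht).continuousAt.continuousWithinAt)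
    (fun t ht => (hderiv t (interior_subset ht)).hasDerivWithinAt) (fun t ht => ?_)
  rw [interior_Ico] at ht
  linarith [integralExpHalfSq_add_sub_integralExpHalfSq_sub_le x ht.1.le ht.2]

theorem M0_three_point_ineq (z x : ℝ) (hz0 : 0 ≤ z) (hz1 : z < 1) :
    M0 ((x + z) ^ 2 / 2) + M0 ((x - z) ^ 2 / 2) ≥
      2 * Real.sqrt (1 - z ^ 2) * M0 (x ^ 2 / (2 * (1 - z ^ 2))) := by
  have hscaled : x ^ 2 / (2 * (1 - z ^ 2)) = (x / √(1 - z ^ 2)) ^ 2 / 2 := by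
    rw [div_pow, sq_sqrt (by nlinarith), div_div, mul_comm 2]
  have hgap := monotoneOn_threePointGap x ⟨le_rfl, zero_lt_one⟩ ⟨hz0, hz1⟩ hz0
  rw [threePointGap_zero, threePointGap] at hgap
  rw [hscaled, M0_sq_div_two_s6, M0_sq_div_two_s6, M0_sq_div_two_s6]
  linarith
end

section
/- Discrete Itô formula: let (g_t)_{t≥0} be a sequence of integers with |g_t − g_{t−1}| = 1 for all t ≥ 1, and let f : ℕ × ℤ → ℝ. Then for any T ≥ 1, f(T, g_T) − f(0, g_0) = Σ_{t=1}^T f_g(t, g_{t−1})·(g_t − g_{t−1}) + Σ_{t=1}^T ( (1/2) f_{gg}(t, g_{t−1}) + f_t(t, g_{t−1}) ), where f_g(t,g) = (f(t,g+1) − f(t,g−1))/2, f_{gg}(t,g) = f(t,g+1) + f(t,g−1) − 2f(t,g), and f_t(t,g) = f(t,g) − f(t−1,g). -/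
lemma step_eq (g : ℕ → ℤ) (hg : ∀ t : ℕ, 1 ≤ t → |g t - g (t - 1)| = 1)
    (f : ℕ × ℤ → ℝ) (t : ℕ) (ht : 1 ≤ t) :
    f (t, g t) - f (t - 1, g (t - 1)) =
      (f (t, g (t - 1) + 1) - f (t, g (t - 1) - 1)) / 2 * ((g t : ℝ) - (g (t - 1) : ℝ))
      + ((1 / 2) * (f (t, g (t - 1) + 1) + f (t, g (t - 1) - 1) - 2 * f (t, g (t - 1)))
          + (f (t, g (t - 1)) - f (t - 1, g (t - 1)))) := by
  rcases (abs_eq (by norm_num)).mp (hg t ht) with h | h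
  · have h1 : g t = g (t - 1) + 1 := by omega
    rw [h1]; push_cast; ring
  · have h1 : g t = g (t - 1) - 1 := by omega
    rw [h1]; push_cast; ring

theorem discrete_ito (g : ℕ → ℤ) (hg : ∀ t : ℕ, 1 ≤ t → |g t - g (t - 1)| = 1)
    (f : ℕ × ℤ → ℝ) (T : ℕ) (hT : 1 ≤ T) :
    f (T, g T) - f (0, g 0) =
      (∑ t ∈ Finset.Icc 1 T,
        (f (t, g (t - 1) + 1) - f (t, g (t - 1) - 1)) / 2 * ((g t : ℝ) - (g (t - 1) : ℝ)))
      + ∑ t ∈ Finset.Icc 1 T,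
        ((1 / 2) * (f (t, g (t - 1) + 1) + f (t, g (t - 1) - 1) - 2 * f (t, g (t - 1)))
          + (f (t, g (t - 1)) - f (t - 1, g (t - 1)))) := by
  rw [← Finset.sum_add_distrib]
  induction T with
  | zero => omega
  | succ n ih =>
    rcases Nat.eq_zero_or_pos n with h0 | hn
    · subst h0
      simp only [Finset.Icc_self, Finset.sum_singleton]
      exact step_eq g hg f 1 le_rfl
    · rw [Finset.sum_Icc_succ_top (by omega : 1 ≤ n + 1), ← ih hn]
      have := step_eq g hg f (n + 1) (by omega)
      simp only [Nat.add_sub_cancel] at this ⊢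
      linarith
end

section
/- If v : ℝ → ℝ is twice differentiable and satisfies the ODE v″(z) = z·v′(z) for all z, then there exist constants C, D such that v(z) = C·erfi(z/√2) + D for all z. -/
open Real

/-! The derivative `w = v'` solves `w' = z w`, so the integrating factor makes
`w z * exp (-z² / 2)` constant and `v' z = v' 0 * exp (z² / 2)`. Integrating, and substituting
`t = √2 s`, turns `∫₀ᶻ exp (t² / 2)` into `√(π / 2) * erfi (z / √2)`. -/

theorem eq_mul_exp_of_hasDerivAt_mul {f f' w : ℝ → ℝ} (hf : ∀ z, HasDerivAt f (f' z) z)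
    (hw : ∀ z, HasDerivAt w (f' z * w z) z) (z : ℝ) :
    w z = w 0 * exp (f z - f 0) := by
  have hderiv : ∀ x, HasDerivAt (fun x => w x * exp (-f x)) 0 x := fun x =>
    ((hw x).mul ((hf x).neg.exp)).congr_deriv (by ring)
  have hconst : w z * exp (-f z) = w 0 * exp (-f 0) :=
    is_const_of_deriv_eq_zero (fun x => (hderiv x).differentiableAt) (fun x => (hderiv x).deriv) z 0
  calc w z = w z * exp (-f z) * exp (f z) := by
        rw [mul_assoc, ← exp_add, neg_add_cancel, exp_zero, mul_one]
    _ = w 0 * exp (f z - f 0) := by rw [hconst, mul_assoc, ← exp_add, neg_add_eq_sub]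

theorem eq_mul_exp_sq_div_two_of_hasDerivAt {w : ℝ → ℝ} (hw : ∀ z, HasDerivAt w (z * w z) z)
    (z : ℝ) : w z = w 0 * exp (z ^ 2 / 2) := by
  have hf : ∀ x : ℝ, HasDerivAt (fun x : ℝ => x ^ 2 / 2) x x := fun x =>
    ((hasDerivAt_pow 2 x).div_const 2).congr_deriv (by ring)
  simpa using eq_mul_exp_of_hasDerivAt_mul hf hw z

theorem integral_exp_sq_div_two (z : ℝ) :
    ∫ t in (0:ℝ)..z, exp (t ^ 2 / 2) = √(π / 2) * erfi (z / √2) := by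
  have hsqrt2 : (0:ℝ) < √2 := by positivity
  have hscale : ∫ t in (0:ℝ)..z, exp ((t / √2) ^ 2) =
      √2 * ∫ s in (0:ℝ)..(z / √2), exp (s ^ 2) := by
    simpa using
      intervalIntegral.integral_comp_div (fun s => exp (s ^ 2)) hsqrt2.ne' (a := 0) (b := z)
  simp_rw [div_pow, sq_sqrt zero_le_two] at hscale
  rw [hscale, erfi, sqrt_div' _ zero_le_two]
  field_simp
  rw [sq_sqrt zero_le_two]
  ring

theorem ode_solution_erfi (v : ℝ → ℝ) (hv : Differentiable ℝ v)
    (hv' : Differentiable ℝ (deriv v))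
    (hode : ∀ z : ℝ, deriv (deriv v) z = z * deriv v z) :
    ∃ C D : ℝ, ∀ z : ℝ, v z = C * erfi (z / Real.sqrt 2) + D := by
  have hgauss : ∀ z, deriv v z = deriv v 0 * exp (z ^ 2 / 2) :=
    eq_mul_exp_sq_div_two_of_hasDerivAt fun z => hode z ▸ (hv' z).hasDerivAt
  refine ⟨deriv v 0 * √(π / 2), v 0, fun z => ?_⟩
  have hftc : ∫ t in (0:ℝ)..z, deriv v t = v z - v 0 :=
    intervalIntegral.integral_deriv_eq_sub (fun x _ => hv x) (hv'.continuous.intervalIntegrable _ _)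
  rw [intervalIntegral.integral_congr fun t _ => hgauss t, intervalIntegral.integral_const_mul,
    integral_exp_sq_div_two] at hftc
  linarith
end

section
/- Regret decomposition via gaps: in the two-expert prediction problem with cost vectors restricted to {[0,1],[1,0]}, so that the gap sequence satisfies g_0 = 0 and g_t − g_{t−1} ∈ {±1}, if the algorithm places probability p_t on the worst expert at time t and p_t = 1/2 whenever g_{t−1} = 0, then for every T ≥ 1 the regret equals Regret(T) = Σ_{t=1}^T p_t·(g_t − g_{t−1}). -/
open Finset

/-- Cumulative loss of expert `j` up to time `t` (costs are incurred at times `1, 2, …`). -/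
def cumLoss (ℓ : ℕ → Fin 2 → ℝ) (t : ℕ) (j : Fin 2) : ℝ := ∑ i ∈ Finset.Icc 1 t, ℓ i j

/-- The gap between the two experts' cumulative losses at time `t`. -/
noncomputable def gap (ℓ : ℕ → Fin 2 → ℝ) (t : ℕ) : ℝ := |cumLoss ℓ t 0 - cumLoss ℓ t 1|

/-- The probability mass placed at time `t` on the expert with larger cumulative loss
at time `t - 1` (either one if tied). -/
noncomputable def worstMass (ℓ : ℕ → Fin 2 → ℝ) (x : ℕ → Fin 2 → ℝ) (t : ℕ) : ℝ :=
  if cumLoss ℓ (t - 1) 1 ≤ cumLoss ℓ (t - 1) 0 then x t 0 else x t 1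

/-- The regret at time `T`. -/
noncomputable def regret (ℓ : ℕ → Fin 2 → ℝ) (x : ℕ → Fin 2 → ℝ) (T : ℕ) : ℝ :=
  (∑ t ∈ Finset.Icc 1 T, (x t 0 * ℓ t 0 + x t 1 * ℓ t 1)) -
    min (cumLoss ℓ T 0) (cumLoss ℓ T 1)

lemma cumLoss_succ (ℓ : ℕ → Fin 2 → ℝ) (t : ℕ) (j : Fin 2) :
    cumLoss ℓ (t + 1) j = cumLoss ℓ t j + ℓ (t + 1) j := by
  unfold cumLoss
  rw [Finset.sum_Icc_succ_top (by omega)]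

lemma cumLoss_zero (ℓ : ℕ → Fin 2 → ℝ) (j : Fin 2) : cumLoss ℓ 0 j = 0 := by
  simp [cumLoss]

lemma D_int (ℓ : ℕ → Fin 2 → ℝ)
    (hℓ : ∀ t : ℕ, 1 ≤ t → (ℓ t = ![0, 1] ∨ ℓ t = ![1, 0])) :
    ∀ t : ℕ, ∃ n : ℤ, cumLoss ℓ t 0 - cumLoss ℓ t 1 = n := by
  intro t
  induction t with
  | zero => exact ⟨0, by simp [cumLoss_zero]⟩
  | succ t ih =>
    obtain ⟨n, hn⟩ := ih
    rcases hℓ (t + 1) (by omega) with h | h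
    · exact ⟨n - 1, by rw [cumLoss_succ, cumLoss_succ]; simp [h]; linarith⟩
    · exact ⟨n + 1, by rw [cumLoss_succ, cumLoss_succ]; simp [h]; linarith⟩

theorem regret_eq_sum_gaps
    (ℓ : ℕ → Fin 2 → ℝ) (x : ℕ → Fin 2 → ℝ)
    (hℓ : ∀ t : ℕ, 1 ≤ t → (ℓ t = ![0, 1] ∨ ℓ t = ![1, 0]))
    (hx : ∀ t : ℕ, 1 ≤ t → x t 0 + x t 1 = 1 ∧ 0 ≤ x t 0 ∧ 0 ≤ x t 1)
    (htie : ∀ t : ℕ, 1 ≤ t → gap ℓ (t - 1) = 0 → x t 0 = 1 / 2 ∧ x t 1 = 1 / 2)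
    (T : ℕ) (hT : 1 ≤ T) :
    regret ℓ x T = ∑ t ∈ Finset.Icc 1 T, worstMass ℓ x t * (gap ℓ t - gap ℓ (t - 1)) := by
  induction T, hT using Nat.le_induction with
  | base =>
    have hg0 : gap ℓ 0 = 0 := by simp [gap, cumLoss_zero]
    obtain ⟨h0, h1⟩ := htie 1 le_rfl (by simpa using hg0)
    rcases hℓ 1 le_rfl with h | h <;>
      simp [regret, gap, worstMass, cumLoss, h, h0, h1]
  | succ T hT ih =>
    -- split off the last term
    have hsum : regret ℓ x (T + 1) = regret ℓ x T
        + (x (T+1) 0 * ℓ (T+1) 0 + x (T+1) 1 * ℓ (T+1) 1)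
        + min (cumLoss ℓ T 0) (cumLoss ℓ T 1)
        - min (cumLoss ℓ (T+1) 0) (cumLoss ℓ (T+1) 1) := by
      unfold regret
      rw [Finset.sum_Icc_succ_top (by omega)]
      ring
    rw [hsum, Finset.sum_Icc_succ_top (by omega), ih]
    have key : (x (T+1) 0 * ℓ (T+1) 0 + x (T+1) 1 * ℓ (T+1) 1)
        + min (cumLoss ℓ T 0) (cumLoss ℓ T 1)
        - min (cumLoss ℓ (T+1) 0) (cumLoss ℓ (T+1) 1)
        = worstMass ℓ x (T+1) * (gap ℓ (T+1) - gap ℓ (T+1-1)) := by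
      have hsucc : (T + 1 - 1) = T := rfl
      obtain ⟨hsum1, _, _⟩ := hx (T+1) (by omega)
      obtain ⟨n, hn⟩ := D_int ℓ hℓ T
      set a := cumLoss ℓ T 0 with ha
      set b := cumLoss ℓ T 1 with hb
      rcases lt_trichotomy a b with hab | hab | hab
      · -- a < b : expert 1 is worse
        have hge : b - a ≥ 1 := by
          have hn0 : n < 0 := by exact_mod_cast show (n:ℝ) < 0 by rw [← hn]; linarith
          have : (n:ℝ) ≤ -1 := by exact_mod_cast (show n ≤ -1 by omega)
          linarith [hn]
        have hwm : worstMass ℓ x (T+1) = x (T+1) 1 := by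
          simp only [worstMass, hsucc, ← ha, ← hb, if_neg (not_le.mpr hab)]
        rcases hℓ (T+1) (by omega) with h | h <;>
          · rw [hwm, hsucc]
            simp only [gap, cumLoss_succ, ← ha, ← hb, h]
            simp only [Matrix.cons_val_zero, Matrix.cons_val_one, Matrix.head_cons]
            rw [abs_of_nonpos (by linarith), abs_of_nonpos (by linarith)]
            rw [min_eq_left (by linarith), min_eq_left (by linarith)]
            linarith
      · -- tie
        have hg : gap ℓ T = 0 := by simp [gap, ← ha, ← hb, hab]
        obtain ⟨h0, h1⟩ := htie (T+1) (by omega) (by rw [hsucc]; exact hg)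
        have hwm : worstMass ℓ x (T+1) = 1/2 := by
          simp only [worstMass, hsucc, ← ha, ← hb]
          split <;> simp [h0, h1]
        rcases hℓ (T+1) (by omega) with h | h
        · rw [hwm, hsucc, hg]
          simp only [gap, cumLoss_succ, ← ha, ← hb, h, hab]
          simp only [Matrix.cons_val_zero, Matrix.cons_val_one, Matrix.head_cons]
          rw [h0, h1, min_self, min_eq_left (by linarith), abs_of_nonpos (by linarith)]
          ring
        · rw [hwm, hsucc, hg]
          simp only [gap, cumLoss_succ, ← ha, ← hb, h, hab]
          simp only [Matrix.cons_val_zero, Matrix.cons_val_one, Matrix.head_cons]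
          rw [h0, h1, min_self, min_eq_right (by linarith), abs_of_nonneg (by linarith)]
          ring
      · -- a > b : expert 0 is worse
        have hge : a - b ≥ 1 := by
          have hn0 : 0 < n := by exact_mod_cast show (0:ℝ) < n by rw [← hn]; linarith
          have : (1:ℝ) ≤ n := by exact_mod_cast (show 1 ≤ n by omega)
          linarith [hn]
        have hwm : worstMass ℓ x (T+1) = x (T+1) 0 := by
          simp only [worstMass, hsucc, ← ha, ← hb, if_pos (le_of_lt hab)]
        rcases hℓ (T+1) (by omega) with h | h <;>
          · rw [hwm, hsucc]
            simp only [gap, cumLoss_succ, ← ha, ← hb, h]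
            simp only [Matrix.cons_val_zero, Matrix.cons_val_one, Matrix.head_cons]
            rw [abs_of_nonneg (by linarith), abs_of_nonneg (by linarith)]
            rw [min_eq_right (by linarith), min_eq_right (by linarith)]
            linarith
    linarith [key]
end
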